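/- arXiv:2409.12486 — 6 statements merged into one kernel-verified Lean document; each statement's English description precedes it below -/
import Mathlib

section
/- In the Weyl algebra on variables X^i_j (1 ≤ i,j ≤ N) with Y^i_j = ∂/∂X^j_i, for any nonnegative integers r, s the operator identity Tr(X^r [X,Y] X^s) = -Tr(X^r)·Tr(X^s) holds, where matrix products and traces are taken with the noncommuting entries ordered as written. -/
/-!
Write `D = ⁅X, Y⁆`. The Weyl relations say that `⁅D a b, ·⁆`, applied entrywise to `X`, is the
matrix commutator with the elementary matrix `E_ba`; both sides are derivations, so the same holds
for every power `X ^ s`. Moving `X ^ s` to the left of `D` in `Tr (X ^ r * D * X ^ s)` therefore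
produces the correction `N • Tr (X ^ (r + s)) - Tr (X ^ r) * Tr (X ^ s)`, and the remaining term
`Tr (X ^ (s + r) * D)` equals `-N • Tr (X ^ (r + s))`: reorder `Y * X` once more inside it and
use that `X ^ (s + r)` commutes with `X`.
-/

noncomputable section

/-- Matrix power of an `N × N` matrix with entries in a noncommutative ring,
with the entries multiplied in the written order. -/
def matPow {N : ℕ} {A : Type*} [Ring A] (X : Fin N → Fin N → A) : ℕ → Fin N → Fin N → A
  | 0 => fun i j => if i = j then 1 else 0
  | (r + 1) => fun i j => ∑ l, X i l * matPow X r l j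

namespace Ring

variable {A : Type*} [Ring A]

theorem lie_mul (a b c : A) : ⁅a, b * c⁆ = ⁅a, b⁆ * c + b * ⁅a, c⁆ := by
  simp only [lie_def, mul_sub, sub_mul, mul_assoc]; abel

theorem mul_lie (a b c : A) : ⁅a * b, c⁆ = a * ⁅b, c⁆ + ⁅a, c⁆ * b := by
  simp only [lie_def, mul_sub, sub_mul, mul_assoc]; abel

theorem lie_sum {ι : Type*} (s : Finset ι) (a : A) (f : ι → A) :
    ⁅a, ∑ i ∈ s, f i⁆ = ∑ i ∈ s, ⁅a, f i⁆ := by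
  simp only [lie_def, Finset.mul_sum, Finset.sum_mul, Finset.sum_sub_distrib]

theorem sub_lie (a b c : A) : ⁅a - b, c⁆ = ⁅a, c⁆ - ⁅b, c⁆ := by
  simp only [lie_def, mul_sub, sub_mul]; abel

theorem sum_lie {ι : Type*} (s : Finset ι) (f : ι → A) (a : A) :
    ⁅∑ i ∈ s, f i, a⁆ = ∑ i ∈ s, ⁅f i, a⁆ := by
  simp only [lie_def, Finset.mul_sum, Finset.sum_mul, Finset.sum_sub_distrib]

end Ring

namespace Matrix

variable {n A : Type*} [Fintype n] [Ring A]

theorem map_lie_mul {l o : Type*} (d : A) (M : Matrix l n A) (P : Matrix n o A) :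
    (M * P).map (⁅d, ·⁆) = M.map (⁅d, ·⁆) * P + M * P.map (⁅d, ·⁆) := by
  ext i j
  simp only [map_apply, mul_apply, add_apply, Ring.lie_sum, Ring.lie_mul, Finset.sum_add_distrib]

theorem trace_mul_mul (P Q R : Matrix n n A) :
    trace (P * Q * R) = ∑ i, ∑ a, ∑ b, P i a * Q a b * R b i := by
  simp only [trace, diag, mul_apply, Finset.sum_mul]
  exact Finset.sum_congr rfl fun i _ ↦ Finset.sum_comm

theorem trace_mul_mul' (P Q R : Matrix n n A) :
    trace (P * Q * R) = ∑ i, ∑ a, ∑ b, P b i * Q i a * R a b := by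
  rw [trace_mul_mul]
  exact ((Finset.sum_congr rfl fun i _ ↦ Finset.sum_comm).trans Finset.sum_comm).symm

variable [DecidableEq n]

theorem map_lie_pow {d : A} {E X : Matrix n n A} (h : X.map (⁅d, ·⁆) = ⁅E, X⁆) (k : ℕ) :
    (X ^ k).map (⁅d, ·⁆) = ⁅E, X ^ k⁆ := by
  induction k with
  | zero =>
    rw [pow_zero, Ring.lie_def, mul_one, one_mul, sub_self]
    ext i j
    rw [map_apply, one_apply, zero_apply]
    split_ifs <;> simp [Ring.lie_def]
  | succ k ih => rw [pow_succ', map_lie_mul, h, ih, Ring.lie_mul]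

theorem commute_pow_apply {c : A} {X : Matrix n n A} (h : ∀ i j, Commute c (X i j)) (k : ℕ)
    (i j : n) : Commute c ((X ^ k) i j) := by
  induction k generalizing i j with
  | zero => rw [pow_zero, one_apply]; split_ifs <;> simp
  | succ k ih =>
    rw [pow_succ', mul_apply]
    exact Commute.sum_right _ _ _ fun l _ ↦ (h i l).mul_right (ih l j)

theorem pow_apply_commute_pow_apply {X : Matrix n n A} (h : ∀ i j p q, Commute (X i j) (X p q))
    (k m : ℕ) (i j p q : n) : Commute ((X ^ k) i j) ((X ^ m) p q) :=
  commute_pow_apply (fun p q ↦ (commute_pow_apply (fun i j ↦ (h i j p q).symm) k i j).symm) m p q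

theorem lie_single_apply (a b p q : n) (M : Matrix n n A) :
    ⁅(single b a 1 : Matrix n n A), M⁆ p q
      = (if p = b then M a q else 0) - (if a = q then M p b else 0) := by
  by_cases hpb : p = b <;> by_cases haq : a = q <;> simp [Ring.lie_def, hpb, haq, Ne.symm]

theorem trace_mul_mul_of_map_lie (P D M : Matrix n n A) (hPM : ∀ i j p q, Commute (P i j) (M p q))
    (hDM : ∀ a b, M.map (⁅D a b, ·⁆) = ⁅(single b a 1 : Matrix n n A), M⁆) :
    trace (P * D * M) = trace (M * P * D) + Fintype.card n • trace (P * M) - trace P * trace M := by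
  have hswap : ∀ i a b, P i a * D a b * M b i
      = M b i * P i a * D a b + (P i a * M a i - if a = i then P i i * M b b else 0) := by
    intro i a b
    have h := congr_fun₂ (hDM a b) b i
    rw [map_apply, lie_single_apply, if_pos rfl, Ring.lie_def, sub_eq_iff_eq_add'] at h
    rw [mul_assoc, h, mul_add, ← mul_assoc, (hPM i a b i).eq, mul_sub]
    split_ifs with hai
    · subst hai; rfl
    · rw [mul_zero]
  rw [trace_mul_mul]
  simp only [hswap, Finset.sum_add_distrib, Finset.sum_sub_distrib]
  have htrPM : ∑ i, ∑ a, ∑ _b : n, P i a * M a i = Fintype.card n • trace (P * M) := by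
    simp [trace, mul_apply, Finset.smul_sum]
  have hPtrM : ∑ i, ∑ a, ∑ b, (if a = i then P i i * M b b else 0) = trace P * trace M := by
    simp [trace, Finset.sum_mul_sum]
  rw [← trace_mul_mul', htrPM, hPtrM, add_sub_assoc]

section Weyl

variable {X Y : Matrix n n A}
  (hYX : ∀ i j p q, ⁅Y i j, X p q⁆ = if i = q ∧ p = j then 1 else 0)
include hYX

theorem map_lie_lie_apply (hXX : ∀ i j p q, Commute (X i j) (X p q)) (a b : n) :
    X.map (⁅⁅X, Y⁆ a b, ·⁆) = ⁅(single b a 1 : Matrix n n A), X⁆ := by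
  ext p q
  have hterm : ∀ l, ⁅X a l * Y l b - Y a l * X l b, X p q⁆
      = X a l * (if l = q ∧ p = b then 1 else 0) - (if a = q ∧ p = l then 1 else 0) * X l b := by
    intro l
    rw [Ring.sub_lie, Ring.mul_lie, Ring.mul_lie, hYX, hYX, (hXX a l p q).lie_eq,
      (hXX l b p q).lie_eq]
    simp only [zero_mul, mul_zero, add_zero, zero_add]
  rw [map_apply, lie_single_apply, Ring.lie_def X Y, sub_apply, mul_apply, mul_apply,
    ← Finset.sum_sub_distrib, Ring.sum_lie]
  simp only [hterm, Finset.sum_sub_distrib]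
  simp [mul_ite, ite_mul, ite_and]

theorem trace_mul_mul_swap {M : Matrix n n A} (hMX : ∀ i j p q, Commute (M i j) (X p q)) :
    trace (M * Y * X) = trace (X * M * Y) + Fintype.card n • trace M := by
  have hswap : ∀ i a b, M i a * Y a b * X b i
      = X b i * M i a * Y a b + (if a = i then M i i else 0) := by
    intro i a b
    have h := hYX a b b i
    rw [Ring.lie_def, sub_eq_iff_eq_add'] at h
    simp only [and_true] at h
    rw [mul_assoc, h, mul_add, ← mul_assoc, (hMX i a b i).eq]
    split_ifs with hai
    · subst hai; rw [mul_one]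
    · rw [mul_zero]
  rw [trace_mul_mul, trace_mul_mul']
  simp [hswap, Finset.sum_add_distrib, trace, Finset.smul_sum]

theorem trace_mul_lie {M : Matrix n n A} (hMX : ∀ i j p q, Commute (M i j) (X p q))
    (hMX' : M * X = X * M) : trace (M * ⁅X, Y⁆) = -(Fintype.card n • trace M) := by
  rw [Ring.lie_def, mul_sub, trace_sub, ← mul_assoc, ← mul_assoc, trace_mul_mul_swap hYX hMX,
    hMX']
  abel

theorem trace_pow_mul_lie_mul_pow (hXX : ∀ i j p q, Commute (X i j) (X p q)) (r s : ℕ) :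
    trace (X ^ r * ⁅X, Y⁆ * X ^ s) = -(trace (X ^ r) * trace (X ^ s)) := by
  have hlie : ∀ a b, (X ^ s).map (⁅⁅X, Y⁆ a b, ·⁆) = ⁅(single b a 1 : Matrix n n A), X ^ s⁆ :=
    fun a b ↦ map_lie_pow (map_lie_lie_apply hYX hXX a b) s
  have hcomm : ∀ i j p q, Commute ((X ^ (s + r)) i j) (X p q) := fun i j p q ↦ by
    simpa using pow_apply_commute_pow_apply hXX (s + r) 1 i j p q
  rw [trace_mul_mul_of_map_lie _ _ _ (pow_apply_commute_pow_apply hXX r s) hlie, ← pow_add,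
    trace_mul_lie hYX hcomm (pow_mul_comm' X _), ← pow_add, add_comm s r]
  abel

end Weyl

end Matrix

theorem matPow_eq_pow {N : ℕ} {A : Type*} [Ring A] (X : Fin N → Fin N → A) (r : ℕ) :
    matPow X r = Matrix.of X ^ r := by
  induction r with
  | zero => ext i j; simp [matPow, Matrix.one_apply]
  | succ r ih => ext i j; simp [matPow, ih, pow_succ', Matrix.mul_apply]

theorem statement2_general (N : ℕ) (A : Type*) [Ring A]
    (X Y : Fin N → Fin N → A)
    (hYX : ∀ i j p q : Fin N,
      Y i j * X p q - X p q * Y i j = if i = q ∧ p = j then 1 else 0)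
    (hXX : ∀ i j p q : Fin N, X i j * X p q = X p q * X i j)
    (r s : ℕ) :
    (∑ i, ∑ a, ∑ b, matPow X r i a *
        (∑ l, (X a l * Y l b - Y a l * X l b)) * matPow X s b i)
      = - ((∑ i, matPow X r i i) * (∑ i, matPow X s i i)) := by
  have key := Matrix.trace_pow_mul_lie_mul_pow (X := Matrix.of X) (Y := Matrix.of Y) hYX hXX r s
  rw [Matrix.trace_mul_mul] at key
  simpa [matPow_eq_pow, Matrix.trace, Ring.lie_def, Matrix.mul_apply, Finset.sum_sub_distrib]
    using key

/-- In the Weyl algebra on variables `X^i_j` with `Y^i_j = ∂/∂X^j_i`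
(i.e. `[Y^i_j, X^k_l] = δ^i_l δ^k_j`), one has `Tr(X^r [X,Y] X^s) = -Tr(X^r)·Tr(X^s)`. -/
theorem statement2 (N : ℕ) (A : Type*) [Ring A]
    (X Y : Fin N → Fin N → A)
    (hYX : ∀ i j p q : Fin N,
      Y i j * X p q - X p q * Y i j = if i = q ∧ p = j then 1 else 0)
    (hXX : ∀ i j p q : Fin N, X i j * X p q = X p q * X i j)
    (hYY : ∀ i j p q : Fin N, Y i j * Y p q = Y p q * Y i j)
    (r s : ℕ) :
    (∑ i, ∑ a, ∑ b, matPow X r i a *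
        (∑ l, (X a l * Y l b - Y a l * X l b)) * matPow X s b i)
      = - ((∑ i, matPow X r i i) * (∑ i, matPow X s i i)) :=
  statement2_general N A X Y hYX hXX r s
end
end

section
/- Let μ^*(E^i_j) = X^i_l Y^l_j - X^l_j Y^i_l - A^a_j B^i_a be the quantum moment map operators acting on polynomials in variables X^i_j and A^a_i (where Y^i_j = ∂/∂X^j_i and B^i_a = ∂/∂A^a_i). Then on the subspace of polynomials f satisfying (μ^*(E^i_j) + k δ^i_j) f = 0 for all i,j, the operator Tr(X^m)·(k·Id) equals the operator ρ(1 ⊗ z^m) := A^a_i (X^m)^i_j ∂/∂A^a_j. That is, k·Tr(X^m) = Σ_a A^a (X^m) B_a as operators on the constrained subspace. -/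
/-!
Write the constraint as the matrix identity `X Y - Y X - B A + (k f) • 1 = 0`, with
`Y = (∂/∂X^j_i)`, `A = (A^a_i)`, `B = (∂/∂A^a_i)` applied to `f`, and take `trace (X ^ m * _)`.
The commutator term vanishes because `X ^ m` commutes with `X` and the trace is cyclic; what
remains is `k f · Tr (X ^ m) = trace (A X ^ m B)`, and the right side is `ρ(1 ⊗ z^m) f`.
-/

open MvPolynomial

namespace Matrix

variable {R : Type*} [CommRing R] {ι κ : Type*} [Fintype ι] [Fintype κ]

theorem trace_mul_commutator_eq_zero {M P : Matrix ι ι R} (h : Commute M P) (D : Matrix ι ι R) :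
    trace (M * (P * D - D * P)) = 0 := by
  rw [mul_sub, trace_sub, sub_eq_zero, ← mul_assoc, h.eq, trace_mul_cycle', mul_assoc]

theorem trace_mul_mul_eq_sum (A : Matrix κ ι R) (M : Matrix ι ι R) (B : Matrix ι κ R) :
    trace (A * M * B) = ∑ a, ∑ i, ∑ j, A a i * M i j * B j a := by
  simp only [trace, diag, mul_apply, Finset.sum_mul]
  exact Finset.sum_congr rfl fun _ _ => Finset.sum_comm

theorem mul_trace_pow_eq_trace_mul_pow_mul [DecidableEq ι] {X Y : Matrix ι ι R}
    {A : Matrix κ ι R} {B : Matrix ι κ R} {c : R} (h : X * Y - Y * X - B * A + c • 1 = 0)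
    (m : ℕ) : c * trace (X ^ m) = trace (A * X ^ m * B) := by
  have h0 := congrArg (fun C => trace (X ^ m * C)) h
  rw [mul_add, mul_sub, trace_add, trace_sub,
    trace_mul_commutator_eq_zero ((Commute.refl X).pow_left m), mul_smul_comm, mul_one,
    trace_smul, smul_eq_mul, mul_zero, trace_zero, zero_sub, neg_add_eq_zero] at h0
  rw [← h0, trace_mul_cycle', Matrix.mul_assoc]

end Matrix

/-- On the subspace of polynomials `f` in the variables `X^i_j, A^a_i`
killed by the shifted quantum moment map `μ^*(E^i_j) + k δ^i_j` (where
`μ^*(E^i_j) = X^i_l Y^l_j - X^l_j Y^i_l - A^a_j B^i_a`, `Y^i_j = ∂/∂X^j_i`,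
`B^i_a = ∂/∂A^a_i`), the operator `k·Tr(X^m)` (multiplication) agrees with
`ρ(1 ⊗ z^m) = A^a_i (X^m)^i_j ∂/∂A^a_j`. -/
theorem statement3 (N n : ℕ) (k : ℤ) (m : ℕ)
    (f : MvPolynomial ((Fin N × Fin N) ⊕ (Fin n × Fin N)) ℂ)
    (hf : ∀ i j : Fin N,
      (∑ l, X (Sum.inl (i, l)) * pderiv (Sum.inl (j, l)) f)
        - (∑ l, X (Sum.inl (l, j)) * pderiv (Sum.inl (l, i)) f)
        - (∑ a : Fin n, X (Sum.inr (a, j)) * pderiv (Sum.inr (a, i)) f)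
        + (k : ℂ) • (if i = j then f else 0) = 0) :
    (k : ℂ) •
        (Matrix.trace ((Matrix.of fun i j : Fin N => X (Sum.inl (i, j))) ^ m) * f)
      = ∑ a : Fin n, ∑ i, ∑ j,
          X (Sum.inr (a, i)) *
            ((Matrix.of fun p q : Fin N => X (Sum.inl (p, q))) ^ m) i j *
            pderiv (Sum.inr (a, j)) f := by
  set MX : Matrix (Fin N) (Fin N) (MvPolynomial ((Fin N × Fin N) ⊕ (Fin n × Fin N)) ℂ) :=
    Matrix.of fun i j => X (Sum.inl (i, j))
  let MY := Matrix.of fun i j : Fin N => pderiv (Sum.inl (j, i)) f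
  let MA : Matrix (Fin n) (Fin N) (MvPolynomial ((Fin N × Fin N) ⊕ (Fin n × Fin N)) ℂ) :=
    Matrix.of fun a i => X (Sum.inr (a, i))
  let MB := Matrix.of fun i (a : Fin n) => pderiv (Sum.inr (a, i)) f
  have hmat : MX * MY - MY * MX - MB * MA + ((k : ℂ) • f) • 1 = 0 := by
    refine Matrix.ext fun i j => ?_
    simpa [MX, MY, MA, MB, Matrix.mul_apply, Matrix.one_apply, mul_comm] using hf i j
  rw [mul_comm, ← smul_mul_assoc, Matrix.mul_trace_pow_eq_trace_mul_pow_mul hmat,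
    Matrix.trace_mul_mul_eq_sum]
  rfl
end

section
/- Fix positive integers n, k, N, m with 1 ≤ m ≤ n. Let λ, μ ∈ ℕ^N be partitions with λ cuttable (admissible with λ_{N-n+1} = k, assuming N ≥ n), and suppose λ ≥_m μ ≥_{n-m} λ^↓, where α ≥_p β means α_i ≥ β_i ≥ α_{i+p} for all i (with α_i = 0 for i > N). Then μ_i = k for all N - n < i ≤ N - m, and μ_i = 0 for all i > N - m. -/
/-- Extension of a finite tuple by zero. -/
def extZ {N : ℕ} (f : Fin N → ℕ) (j : ℕ) : ℕ := if h : j < N then f ⟨j, h⟩ else 0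

/-- The interlacing relation `α ≥_p β`, i.e. `α_i ≥ β_i ≥ α_{i+p}` for all `i`
(entries beyond the length being zero). -/
def Interlace (p : ℕ) (α β : ℕ → ℕ) : Prop := ∀ j : ℕ, β j ≤ α j ∧ α (j + p) ≤ β j

/-! Admissibility gives `λ_i ≥ k` and cuttability `λ_{N-n+1} = k`, so the antitone `λ` equals `k`
on its last `n` entries and `λ↓` vanishes there. On `N - n < i ≤ N - m` the interlacing
`λ ≥_m μ` squeezes `μ_i` between `λ_{i+m} = k` and `λ_i = k`; for `i > N - m` the interlacing
`μ ≥_{n-m} λ↓` bounds `μ_i` by `λ↓_{i-n+m} = 0`. -/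

theorem extZ_of_lt {N : ℕ} (f : Fin N → ℕ) {j : ℕ} (hj : j < N) : extZ f j = f ⟨j, hj⟩ :=
  dif_pos hj

theorem Antitone.eq_of_le_of_forall_ge {α β : Type*} [Preorder α] [PartialOrder β] {f : α → β}
    (hf : Antitone f) {a i : α} {k : β} (hk : ∀ x, k ≤ f x) (ha : f a = k) (hai : a ≤ i) :
    f i = k :=
  le_antisymm (ha ▸ hf hai) (hk i)

namespace Interlace

variable {N p : ℕ} {α β : Fin N → ℕ}

theorem le_of_extZ (h : Interlace p (extZ α) (extZ β)) (i : Fin N) : β i ≤ α i := by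
  simpa only [extZ_of_lt _ i.2, Fin.eta] using (h i).1

theorem le_of_extZ_of_add_eq (h : Interlace p (extZ α) (extZ β)) (i j : Fin N)
    (hij : (i : ℕ) + p = j) : α j ≤ β i := by
  simpa only [hij, extZ_of_lt _ i.2, extZ_of_lt _ j.2, Fin.eta] using (h i).2

end Interlace

theorem statement7_general (N n k m : ℕ) (hmn : m ≤ n) (hnN : n ≤ N)
    (lam mu : Fin N → ℕ) (hlam : Antitone lam)
    (hadm : (∀ i, k ≤ lam i) ∧
      ∀ i : Fin N, ∀ h : (i : ℕ) + n < N, lam ⟨(i : ℕ) + n, h⟩ + k ≤ lam i)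
    (hcut : ∀ h : N - n < N, lam ⟨N - n, h⟩ = k)
    (h1 : Interlace m (extZ lam) (extZ mu))
    (h2 : Interlace (n - m) (extZ mu) (extZ fun i => lam i - k)) :
    (∀ i : Fin N, N - n ≤ (i : ℕ) → (i : ℕ) < N - m → mu i = k) ∧
      (∀ i : Fin N, N - m ≤ (i : ℕ) → mu i = 0) := by
  have lam_tail : ∀ i : Fin N, N - n ≤ (i : ℕ) → lam i = k := fun i hi =>
    hlam.eq_of_le_of_forall_ge hadm.1 (hcut (by omega)) (Fin.mk_le_mk.2 hi)
  refine ⟨fun i hi hlt => le_antisymm ?_ ?_, fun i hi => ?_⟩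
  · exact lam_tail i hi ▸ h1.le_of_extZ i
  · have hupper := h1.le_of_extZ_of_add_eq i ⟨i + m, by omega⟩ rfl
    rwa [lam_tail _ (by simp only; omega)] at hupper
  · have hlower := h2.le_of_extZ_of_add_eq ⟨i - (n - m), by omega⟩ i (by simp only; omega)
    rwa [lam_tail _ (by simp only; omega), Nat.sub_self, Nat.le_zero] at hlower

/-- Let `λ, μ ∈ ℕ^N` be partitions, with `λ` cuttable (admissible and
`λ_{N-n+1} = k`), and suppose `λ ≥_m μ ≥_{n-m} λ↓`.  Then `μ_i = k` for `N-n < i ≤ N-m`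
and `μ_i = 0` for `i > N-m` (indices 1-based). -/
theorem statement7 (N n k m : ℕ) (hm : 1 ≤ m) (hmn : m ≤ n) (hnN : n ≤ N) (hk : 1 ≤ k)
    (lam mu : Fin N → ℕ) (hlam : Antitone lam) (hmu : Antitone mu)
    (hadm : (∀ i, k ≤ lam i) ∧
      ∀ i : Fin N, ∀ h : (i : ℕ) + n < N, lam ⟨(i : ℕ) + n, h⟩ + k ≤ lam i)
    (hcut : ∀ h : N - n < N, lam ⟨N - n, h⟩ = k)
    (h1 : Interlace m (extZ lam) (extZ mu))
    (h2 : Interlace (n - m) (extZ mu) (extZ fun i => lam i - k)) :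
    (∀ i : Fin N, N - n ≤ (i : ℕ) → (i : ℕ) < N - m → mu i = k) ∧
      (∀ i : Fin N, N - m ≤ (i : ℕ) → mu i = 0) :=
  statement7_general N n k m hmn hnN lam mu hlam hadm hcut h1 h2
end

section
/- Let λ ∈ ℕ^{N+n} be a cuttable partition. Then the map μ ↦ μ^{♮↓} is a bijection between { μ ∈ ℕ^{N+n} : λ ≥_m μ ≥_{n-m} λ^↓ } and { ν ∈ ℕ^N : λ^{♮↓} ≥_m ν ≥_{n-m} λ^{♮↓↓} }. -/
/-- Admissibility of a partition. -/
def IsAdmissible (M n k : ℕ) (lam : Fin M → ℕ) : Prop :=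
  Antitone lam ∧ (∀ i, k ≤ lam i) ∧
    ∀ i : Fin M, ∀ h : (i : ℕ) + n < M, lam ⟨(i : ℕ) + n, h⟩ + k ≤ lam i

/-- Cuttability of a partition of length `N + n`. -/
def IsCuttable (N n k : ℕ) (lam : Fin (N + n) → ℕ) : Prop :=
  IsAdmissible (N + n) n k lam ∧ ∀ h : N < N + n, lam ⟨N, h⟩ = k

/-!
After zero extension, cuttability pins `λ` down beyond position `N`: it equals `k` on
`[N, N + n)` and `0` afterwards, while `λ_j ≥ 2k` for `j < N`. The interlacing conditions
then force every `μ` of the source set to equal `k` on `[N, N + n - m)` and `0` afterwards,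
with `μ_j ≥ k` for `j < N`, so `μ` is recovered from `ν = μ^{♮↓}` by adding `k` and
appending `k^{n-m} 0^m`. Subtracting `k` entrywise preserves interlacing, and the target
conditions on `ν` are exactly the source conditions relative to `λ^↓` in place of `λ`.
-/

section extZ

variable {M : ℕ}

lemma extZ_tsub (f : Fin M → ℕ) (c : ℕ) :
    extZ (fun i => f i - c) = fun j => extZ f j - c := by
  funext j
  unfold extZ
  split_ifs <;> simp

lemma extZ_castAdd_tsub {n : ℕ} (f : Fin (M + n) → ℕ) {c : ℕ}
    (hf : ∀ j, M ≤ j → extZ f j ≤ c) :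
    extZ (fun i : Fin M => f (Fin.castAdd n i) - c) = fun j => extZ f j - c := by
  funext j
  by_cases hj : j < M
  · simp [extZ, hj, show j < M + n by omega]
  · rw [Nat.sub_eq_zero_of_le (hf j (not_lt.1 hj))]
    exact dif_neg hj

lemma extZ_restrict (F : ℕ → ℕ) (hF : ∀ j, M ≤ j → F j = 0) :
    extZ (fun i : Fin M => F i) = F := by
  funext j
  by_cases hj : j < M
  · simp [extZ, hj]
  · simp [extZ, hj, hF j (not_lt.1 hj)]

lemma extZ_injective : Function.Injective (extZ : (Fin M → ℕ) → ℕ → ℕ) := by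
  intro f g h
  funext i
  simpa [extZ] using congrFun h i

lemma Antitone.extZ {f : Fin M → ℕ} (hf : Antitone f) : Antitone (extZ f) := by
  intro a b hab
  unfold _root_.extZ
  split_ifs with hb ha ha
  · exact hf (Fin.mk_le_mk.2 hab)
  · omega
  · exact Nat.zero_le _
  · exact le_rfl

end extZ

lemma Interlace.tsub {p : ℕ} {α β : ℕ → ℕ} (h : Interlace p α β) (c : ℕ) :
    Interlace p (fun j => α j - c) (fun j => β j - c) := fun j =>
  ⟨Nat.sub_le_sub_right (h j).1 c, Nat.sub_le_sub_right (h j).2 c⟩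

structure IsCutShape (N n k : ℕ) (L : ℕ → ℕ) : Prop where
  le_of_lt : ∀ j, j < N + n → k ≤ L j
  le_of_ge : ∀ j, N ≤ j → L j ≤ k
  two_mul_le : ∀ j, j < N → 2 * k ≤ L j
  eq_zero : ∀ j, N + n ≤ j → L j = 0

lemma IsCuttable.isCutShape {N n k : ℕ} {lam : Fin (N + n) → ℕ} (hcut : IsCuttable N n k lam) :
    IsCutShape N n k (extZ lam) := by
  obtain ⟨⟨hanti, hk_le, hstep⟩, hN⟩ := hcut
  refine ⟨fun j hj => ?_, fun j hj => ?_, fun j hj => ?_, fun j hj => dif_neg (by omega)⟩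
  · rw [extZ, dif_pos hj]
    exact hk_le _
  · unfold extZ
    split_ifs with hj'
    · exact (hanti (Fin.mk_le_mk.2 hj)).trans (hN (by omega)).le
    · exact Nat.zero_le _
  · have hjn : j + n < N + n := by omega
    have : lam ⟨j + n, hjn⟩ + k ≤ lam ⟨j, by omega⟩ := hstep ⟨j, by omega⟩ hjn
    have := hk_le ⟨j + n, hjn⟩
    rw [extZ, dif_pos (by omega)]
    omega

/-- `λ ≥_m μ ≥_{n-m} λ^↓`, for zero-extended sequences. -/
def IsBetween (m n k : ℕ) (L M : ℕ → ℕ) : Prop :=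
  Interlace m L M ∧ Interlace (n - m) M (fun j => L j - k)

lemma IsBetween.tsub {m n k : ℕ} {L M : ℕ → ℕ} (h : IsBetween m n k L M) :
    IsBetween m n k (fun j => L j - k) (fun j => M j - k) :=
  ⟨h.1.tsub k, h.2.tsub k⟩

/-- The inverse of `μ ↦ μ^{♮↓}` on zero-extended sequences: `ν ↦ ν^↑` followed by
`k^{n-m} 0^m` (for `ν` supported on `[0, N)`). -/
def uncut (N n m k : ℕ) (V : ℕ → ℕ) (j : ℕ) : ℕ := if j < N + n - m then V j + k else 0

lemma Antitone.uncut {V : ℕ → ℕ} (hV : Antitone V) (N n m k : ℕ) :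
    Antitone (uncut N n m k V) := by
  intro a b hab
  unfold _root_.uncut
  split_ifs
  · exact Nat.add_le_add_right (hV hab) k
  · omega
  · exact Nat.zero_le _
  · exact le_rfl

section IsCutShape

variable {N n m k : ℕ} {L : ℕ → ℕ}

lemma IsBetween.le_of_ge (hL : IsCutShape N n k L) {M : ℕ → ℕ} (h : IsBetween m n k L M)
    (j : ℕ) (hj : N ≤ j) : M j ≤ k :=
  (h.1 j).1.trans (hL.le_of_ge j hj)

lemma IsBetween.eq_uncut (hL : IsCutShape N n k L) (hmn : m ≤ n) {M : ℕ → ℕ}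
    (h : IsBetween m n k L M) : M = uncut N n m k (fun j => M j - k) := by
  funext j
  simp only [uncut]
  split_ifs with hj
  · have := (h.1 j).2
    have := hL.le_of_lt (j + m) (by omega)
    omega
  · -- `M j` is squeezed below `L (j - (n - m)) - k = 0`.
    have hle : M (j - (n - m) + (n - m)) ≤ L (j - (n - m)) - k := (h.2 (j - (n - m))).2
    rw [show j - (n - m) + (n - m) = j by omega] at hle
    have := hL.le_of_ge (j - (n - m)) (by omega)
    omega

lemma IsCutShape.isBetween_uncut (hL : IsCutShape N n k L) (hmn : m ≤ n) {V : ℕ → ℕ}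
    (hV : IsBetween m n k (fun j => L j - k) V) : IsBetween m n k L (uncut N n m k V) := by
  obtain ⟨hV₁, hV₂⟩ := hV
  refine ⟨fun j => ⟨?_, ?_⟩, fun j => ⟨?_, ?_⟩⟩ <;> simp only [uncut]
  · split_ifs with hj
    · have : V j ≤ L j - k := (hV₁ j).1
      have := hL.le_of_lt j (by omega)
      omega
    · exact Nat.zero_le _
  · split_ifs with hj
    · have : L (j + m) - k ≤ V j := (hV₁ j).2
      omega
    · exact (hL.eq_zero (j + m) (by omega)).le
  · split_ifs with hj
    · have : L j - k - k ≤ V j := (hV₂ j).1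
      omega
    · have := hL.le_of_ge j (by omega)
      omega
  · split_ifs with hj
    · have : V (j + (n - m)) ≤ L j - k - k := (hV₂ j).2
      have := hL.two_mul_le j (by omega)
      omega
    · exact Nat.zero_le _

end IsCutShape

theorem statement8_general (N n k m : ℕ) (hmn : m ≤ n)
    (lam : Fin (N + n) → ℕ) (hcut : IsCuttable N n k lam) :
    Set.BijOn (fun (mu : Fin (N + n) → ℕ) (i : Fin N) => mu (Fin.castAdd n i) - k)
      {mu | Antitone mu ∧ Interlace m (extZ lam) (extZ mu) ∧
        Interlace (n - m) (extZ mu) (extZ fun i => lam i - k)}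
      {nu | Antitone nu ∧
        Interlace m (extZ fun i : Fin N => lam (Fin.castAdd n i) - k) (extZ nu) ∧
        Interlace (n - m) (extZ nu) (extZ fun i : Fin N => lam (Fin.castAdd n i) - k - k)} := by
  have hL := hcut.isCutShape
  rw [extZ_tsub lam k, extZ_tsub (fun i : Fin N => lam (Fin.castAdd n i) - k) k,
    extZ_castAdd_tsub lam hL.le_of_ge]
  have hextZ_image {mu : Fin (N + n) → ℕ} (h : IsBetween m n k (extZ lam) (extZ mu)) :=
    extZ_castAdd_tsub mu (h.le_of_ge hL)
  refine ⟨fun mu ⟨hanti, h⟩ => ⟨?_, ?_⟩, fun mu ⟨_, h⟩ mu' ⟨_, h'⟩ heq => ?_,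
    fun nu ⟨hanti, h⟩ => ?_⟩
  · exact fun a b hab => Nat.sub_le_sub_right (hanti ((Fin.strictMono_castAdd n).monotone hab)) k
  · rw [hextZ_image h]
    exact IsBetween.tsub h
  · have heq' := congrArg extZ heq
    dsimp only at heq'
    rw [hextZ_image h, hextZ_image h'] at heq'
    apply extZ_injective
    rw [IsBetween.eq_uncut hL hmn h, IsBetween.eq_uncut hL hmn h', heq']
  · have hextZ :
        extZ (fun i : Fin (N + n) => uncut N n m k (extZ nu) i) = uncut N n m k (extZ nu) :=
      extZ_restrict _ fun j hj => if_neg (by omega)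
    refine ⟨fun i => uncut N n m k (extZ nu) i, ⟨?_, ?_⟩, funext fun i => ?_⟩
    · exact (hanti.extZ.uncut N n m k).comp_monotone Fin.val_strictMono.monotone
    · rw [hextZ]
      exact hL.isBetween_uncut hmn h
    · simp [uncut, extZ, show (i : ℕ) < N + n - m by omega]

/-- For a cuttable `λ ∈ ℕ^{N+n}`, the map `μ ↦ μ^{♮↓}` is a bijection
between `{μ ∈ ℕ^{N+n} : λ ≥_m μ ≥_{n-m} λ↓}` and
`{ν ∈ ℕ^N : λ^{♮↓} ≥_m ν ≥_{n-m} λ^{♮↓↓}}`. -/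
theorem statement8 (N n k m : ℕ) (hm : 1 ≤ m) (hmn : m ≤ n) (hk : 1 ≤ k)
    (lam : Fin (N + n) → ℕ) (hcut : IsCuttable N n k lam) :
    Set.BijOn (fun (mu : Fin (N + n) → ℕ) (i : Fin N) => mu (Fin.castAdd n i) - k)
      {mu | Antitone mu ∧ Interlace m (extZ lam) (extZ mu) ∧
        Interlace (n - m) (extZ mu) (extZ fun i => lam i - k)}
      {nu | Antitone nu ∧
        Interlace m (extZ fun i : Fin N => lam (Fin.castAdd n i) - k) (extZ nu) ∧
        Interlace (n - m) (extZ nu) (extZ fun i : Fin N => lam (Fin.castAdd n i) - k - k)} :=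
  statement8_general N n k m hmn lam hcut
end

section
/- In the enveloping algebra U(gl_M), the Capelli determinant C(u) = Σ_{σ ∈ S_M} sgn(σ) ∏→_{1≤i≤M} ((u + i - M)δ^{σ(i)}_i - E^{σ(i)}_i) (ordered product over increasing i) is central, and it acts on the irreducible highest weight module V_μ with highest weight μ = (μ₁ ≥ ⋯ ≥ μ_M) ∈ ℤ^M as the scalar ∏_{i=1}^M (u - μ_i + i - M). -/
/-!
Write `C(u)` as a column determinant `Σ_σ sgn σ ∏→_k X_{σ(k), k}` of the matrix whose `k`-th
column carries the diagonal shift `u + k + 1 - M`, so the shift grows by one from each column to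
the next. This growth exactly absorbs the commutators `[E_ab, E_a'b']` in every pair of adjacent
columns, so swapping adjacent columns changes the sign of the column determinant; since adjacent
transpositions generate `S_M`, a column determinant with two equal columns vanishes.

Commuting `E_pq` through the ordered product `∏→_k X_{σ(k), k}` produces, term by term, the same
product with column `p` replaced by column `q`, minus the product with the row `q` replaced by
the row `p`. Summed over `σ` with signs, the first is a column determinant with a repeated column
and the second an alternating sum with a repeated row; both vanish unless `p = q`, when both equal
`C(u)`. Hence `C(u)` is central.

On a highest weight vector `v₀` every `σ ≠ 1` contributes nothing: if `j` is the largest index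
moved by `σ`, then `σ j < j`, the factors right of position `j` act on `v₀` by scalars, and the
factor at `j` acts as the raising operator `-E_{σ(j), j}`. The identity term gives the scalar, and
by irreducibility the central element `C(u)` acts by its eigenvalue on `v₀` everywhere.
-/

noncomputable section

def capelli (M : ℕ) {A : Type*} [Ring A] [Algebra ℂ A] (u : ℂ)
    (E : Fin M → Fin M → A) : A :=
  ∑ σ : Equiv.Perm (Fin M),
    ((Equiv.Perm.sign σ : ℤ) •
      ((List.finRange M).map fun i =>
        (if σ i = i then algebraMap ℂ A (u + (i : ℕ) + 1 - M) else 0) - E (σ i) i).prod)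

open Equiv Equiv.Perm Function

namespace List

variable {M : ℕ}

theorem mem_take_finRange {i : Fin M} {n : ℕ} : i ∈ (finRange M).take n ↔ (i : ℕ) < n := by
  simp only [mem_take_iff_getElem, getElem_finRange, length_finRange]
  constructor
  · rintro ⟨j, hj, rfl⟩
    exact (lt_min_iff.1 hj).1
  · exact fun h => ⟨i, by omega, rfl⟩

theorem mem_drop_finRange {i : Fin M} {n : ℕ} : i ∈ (finRange M).drop n ↔ n ≤ (i : ℕ) := by
  simp only [mem_drop_iff_getElem, getElem_finRange, length_finRange]
  constructor
  · rintro ⟨j, hj, rfl⟩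
    simp
  · exact fun h => ⟨i - n, by omega, Fin.ext (by simp; omega)⟩

theorem drop_finRange_eq_cons (k : Fin M) :
    (finRange M).drop k = k :: (finRange M).drop (k + 1) := by
  rw [drop_eq_getElem_cons (by simp)]
  simp

section Monoid

variable {A : Type*} [Monoid A]

theorem prod_map_finRange_update (F : Fin M → A) (k : Fin M) (a : A) :
    ((finRange M).map (update F k a)).prod =
      (((finRange M).take k).map F).prod * a * (((finRange M).drop (k + 1)).map F).prod := by
  have htake : ((finRange M).take k).map (update F k a) = ((finRange M).take k).map F :=
    map_congr_left fun i hi =>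
      update_of_ne (Fin.ne_of_val_ne (mem_take_finRange.1 hi).ne) _ _
  have hdrop : ((finRange M).drop (k + 1)).map (update F k a) =
      ((finRange M).drop (k + 1)).map F :=
    map_congr_left fun i hi =>
      update_of_ne (Fin.ne_of_val_ne (by have := mem_drop_finRange.1 hi; omega)) _ _
  conv_lhs => rw [← take_append_drop k (finRange M), drop_finRange_eq_cons k]
  rw [map_append, prod_append, map_cons, prod_cons, htake, hdrop, update_self, mul_assoc]

theorem prod_map_finRange_eq_take_mul_drop (F : Fin M → A) (k : Fin M) :
    ((finRange M).map F).prod =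
      (((finRange M).take k).map F).prod * F k * (((finRange M).drop (k + 1)).map F).prod := by
  simpa using prod_map_finRange_update F k (F k)

theorem prod_map_finRange_of_eq_off_adjacent (F G : Fin M → A) {i j : Fin M}
    (hij : (j : ℕ) = i + 1) (hG : ∀ k, k ≠ i → k ≠ j → G k = F k) :
    ((finRange M).map G).prod =
      (((finRange M).take i).map F).prod * (G i * G j) *
        (((finRange M).drop (j + 1)).map F).prod := by
  have htake : ((finRange M).take i).map G = ((finRange M).take i).map F :=
    map_congr_left fun k hk => by
      have := mem_take_finRange.1 hk
      exact hG k (Fin.ne_of_val_ne (by omega)) (Fin.ne_of_val_ne (by omega))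
  have hdrop : ((finRange M).drop (j + 1)).map G = ((finRange M).drop (j + 1)).map F :=
    map_congr_left fun k hk => by
      have := mem_drop_finRange.1 hk
      exact hG k (Fin.ne_of_val_ne (by omega)) (Fin.ne_of_val_ne (by omega))
  conv_lhs => rw [← take_append_drop i (finRange M), drop_finRange_eq_cons i, ← hij,
    drop_finRange_eq_cons j]
  rw [map_append, prod_append, map_cons, map_cons, prod_cons, prod_cons, htake, hdrop,
    mul_assoc, mul_assoc]

end Monoid

theorem prod_map_finRange_mul_sub_mul_prod {A : Type*} [Ring A] (F : Fin M → A) (y : A) :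
    ((finRange M).map F).prod * y - y * ((finRange M).map F).prod =
      ∑ k, ((finRange M).map (update F k (F k * y - y * F k))).prod := by
  induction M with
  | zero => simp
  | succ n ih =>
    simp only [finRange_succ, map_cons, map_map, prod_cons, Fin.sum_univ_succ, update_self,
      update_comp_eq_of_forall_ne _ _ (Fin.succ_ne_zero),
      update_comp_eq_of_injective _ (Fin.succ_injective _),
      update_of_ne (Fin.succ_ne_zero _).symm]
    have ih' := ih (F ∘ Fin.succ)
    simp only [comp_apply] at ih'
    rw [← Finset.mul_sum, ← ih']
    noncomm_ring

end List

theorem commute_ite_algebraMap {R A : Type*} [CommSemiring R] [Semiring A] [Algebra R A]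
    (P : Prop) [Decidable P] (r : R) (x : A) : Commute (if P then algebraMap R A r else 0) x := by
  split_ifs
  exacts [Algebra.commute_algebraMap_left r x, Commute.zero_left x]

section SignedSums

variable {ι B : Type*} [Fintype ι] [DecidableEq ι] [AddCommGroup B]

theorem sum_sign_smul_mul_swap (F : Perm ι → B) {i j : ι} (hij : i ≠ j) :
    ∑ σ : Perm ι, (sign σ : ℤ) • F (σ * swap i j) = -∑ σ : Perm ι, (sign σ : ℤ) • F σ := by
  rw [← Equiv.sum_comp (Equiv.mulRight (swap i j)), ← Finset.sum_neg_distrib]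
  refine Finset.sum_congr rfl fun σ _ => ?_
  simp [Perm.sign_mul, sign_swap hij, mul_assoc]

theorem sum_sign_smul_eq_zero_of_swap_mul (F : Perm ι → B) {p q : ι} (hpq : p ≠ q)
    (hF : ∀ σ, F (swap p q * σ) = F σ) : ∑ σ : Perm ι, (sign σ : ℤ) • F σ = 0 :=
  Finset.sum_ninvolution (swap p q * ·)
    (fun σ => by simp [hF, Perm.sign_mul, sign_swap hpq])
    (fun σ _ h => hpq (swap_eq_one_iff.1 (mul_eq_right.1 h)))
    (fun _ => Finset.mem_univ _) (swap_mul_self_mul p q)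

theorem sum_sign_smul_sum_update (F : (ι → ι) → B) (p q : ι) :
    ∑ σ : Perm ι, (sign σ : ℤ) • ∑ k, (if σ k = q then F (update σ k p) else 0) =
      if p = q then ∑ σ : Perm ι, (sign σ : ℤ) • F σ else 0 := by
  have hcollapse : ∀ σ : Perm ι,
      ∑ k, (if σ k = q then F (update σ k p) else 0) = F (update id q p ∘ σ) := by
    intro σ
    rw [Fintype.sum_eq_single (σ.symm q)
        fun k hk => if_neg fun h => hk (by rw [← h, symm_apply_apply]),
      if_pos (σ.apply_symm_apply q)]
    congr 1
    funext x
    simp only [update_apply, comp_apply, id, eq_symm_apply]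
  simp only [hcollapse]
  split_ifs with hpq
  · subst hpq
    simp [show update (id : ι → ι) p p = id from update_eq_self p id]
  · refine sum_sign_smul_eq_zero_of_swap_mul _ hpq fun σ => congrArg F (funext fun x => ?_)
    simp only [comp_apply, Perm.coe_mul, update_apply, id, swap_apply_def]
    split_ifs <;> simp_all

end SignedSums

namespace Module.End

variable {R V : Type*} [CommRing R] [AddCommGroup V] [Module R V]

theorem list_prod_map_apply_eq_smul {ι : Type*} (F : ι → Module.End R V) (c : ι → R) (v : V) :
    ∀ l : List ι, (∀ i ∈ l, F i v = c i • v) → (l.map F).prod v = (l.map c).prod • v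
  | [], _ => by simp
  | i :: l, h => by
    rw [List.map_cons, List.prod_cons, mul_apply,
      list_prod_map_apply_eq_smul F c v l fun k hk => h k (List.mem_cons_of_mem i hk), map_smul,
      h i List.mem_cons_self, smul_smul, List.map_cons, List.prod_cons, mul_comm]

theorem eq_smul_one_of_forall_commute {ι : Type*} (e : ι → ι → Module.End R V)
    (hirr : ∀ W : Submodule R V, (∀ i j, ∀ v ∈ W, e i j v ∈ W) → W = ⊥ ∨ W = ⊤)
    {T : Module.End R V} (hT : ∀ i j, T * e i j = e i j * T) {v₀ : V} (hv₀ : v₀ ≠ 0) {c : R}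
    (hTv : T v₀ = c • v₀) : T = c • 1 := by
  have hinv : ∀ i j, ∀ v ∈ LinearMap.ker (T - c • 1), e i j v ∈ LinearMap.ker (T - c • 1) := by
    intro i j v hv
    have hcomm : (T - c • 1) * e i j = e i j * (T - c • 1) := by
      rw [sub_mul, mul_sub, hT, smul_mul_assoc, mul_smul_comm, one_mul, mul_one]
    rw [LinearMap.mem_ker] at hv ⊢
    rw [← mul_apply, hcomm, mul_apply, hv, map_zero]
  rcases hirr _ hinv with hbot | htop
  · have hv₀ker : v₀ ∈ LinearMap.ker (T - c • 1) := by simp [hTv]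
    rw [hbot, Submodule.mem_bot] at hv₀ker
    exact absurd hv₀ker hv₀
  · exact sub_eq_zero.1 (LinearMap.ker_eq_top.1 htop)

end Module.End

namespace Capelli

variable {M : ℕ} {A : Type*} [Ring A] [Algebra ℂ A] (u : ℂ) (E : Fin M → Fin M → A)

def GlRelations : Prop :=
  ∀ i j p q : Fin M, E i j * E p q - E p q * E i j =
    (if p = j then E i q else 0) - (if i = q then E p j else 0)

def capelliEntry (a b k : Fin M) : A :=
  (if a = b then algebraMap ℂ A (u + (k : ℕ) + 1 - M) else 0) - E a b

def capelliTerm (f g : Fin M → Fin M) : A :=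
  ((List.finRange M).map fun k => capelliEntry u E (f k) (g k) k).prod

/-- The column determinant of the matrix whose `k`-th column is the `g k`-th column of
`(u + k + 1 - M) - E`. -/
def colDet (g : Fin M → Fin M) : A :=
  ∑ σ : Perm (Fin M), (sign σ : ℤ) • capelliTerm u E σ g

theorem capelli_eq_colDet : capelli M u E = colDet u E id := rfl

theorem capelliEntry_succ (a b : Fin M) {i j : Fin M} (hij : (j : ℕ) = i + 1) :
    capelliEntry u E a b j = capelliEntry u E a b i + if a = b then 1 else 0 := by
  simp only [capelliEntry, hij]
  split_ifs
  · rw [show (u + ((i + 1 : ℕ) : ℂ) + 1 - M) = (u + (i : ℕ) + 1 - M) + 1 by push_cast; ring,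
      map_add, map_one]
    abel
  · simp

theorem capelliEntry_commutator (a b p q k l : Fin M) :
    capelliEntry u E a b k * capelliEntry u E p q l -
        capelliEntry u E p q l * capelliEntry u E a b k =
      E a b * E p q - E p q * E a b := by
  simp only [capelliEntry]
  linear_combination (norm := noncomm_ring)
    (commute_ite_algebraMap (a = b) (u + (k : ℕ) + 1 - M : ℂ)
      (if p = q then algebraMap ℂ A (u + (l : ℕ) + 1 - M) else 0)).eq -
      (commute_ite_algebraMap (a = b) (u + (k : ℕ) + 1 - M : ℂ) (E p q)).eq +
      (commute_ite_algebraMap (p = q) (u + (l : ℕ) + 1 - M : ℂ) (E a b)).eq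

variable {E}

theorem capelliEntry_mul_sub (hE : GlRelations E) (a b p q k : Fin M) :
    capelliEntry u E a b k * E p q - E p q * capelliEntry u E a b k =
      (if p = b then capelliEntry u E a q k else 0) -
        (if a = q then capelliEntry u E p b k else 0) := by
  have h : capelliEntry u E a b k * E p q - E p q * capelliEntry u E a b k =
      -(E a b * E p q - E p q * E a b) := by
    simp only [capelliEntry]
    linear_combination (norm := noncomm_ring)
      (commute_ite_algebraMap (a = b) (u + (k : ℕ) + 1 - M) (E p q)).eq
  rw [h, hE, capelliEntry, capelliEntry]
  split_ifs <;> noncomm_ring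

/-- The shift of `u` by one between the columns `i` and `j = i + 1` compensates the commutators,
making this `2 × 2` column determinant alternating in its columns. -/
theorem capelliEntry_adjacent_minor (hE : GlRelations E) (a a' b b' : Fin M) {i j : Fin M}
    (hij : (j : ℕ) = i + 1) :
    capelliEntry u E a b i * capelliEntry u E a' b' j -
        capelliEntry u E a' b i * capelliEntry u E a b' j +
      capelliEntry u E a b' i * capelliEntry u E a' b j -
        capelliEntry u E a' b' i * capelliEntry u E a b j = 0 := by
  have h₁ := capelliEntry_commutator u E a b a' b' i i
  have h₂ := capelliEntry_commutator u E a b' a' b i i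
  rw [hE] at h₁ h₂
  simp only [capelliEntry_succ u E _ _ hij]
  linear_combination (norm := skip) h₁ + h₂
  simp only [capelliEntry]
  split_ifs <;> noncomm_ring

theorem capelliTerm_adjacent_alternating (hE : GlRelations E) (f g : Fin M → Fin M)
    {i j : Fin M} (hij : (j : ℕ) = i + 1) :
    capelliTerm u E f g - capelliTerm u E (f ∘ swap i j) g + capelliTerm u E f (g ∘ swap i j) -
      capelliTerm u E (f ∘ swap i j) (g ∘ swap i j) = 0 := by
  set F : Fin M → A := fun k => capelliEntry u E (f k) (g k) k
  set T := (((List.finRange M).take i).map F).prod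
  set D := (((List.finRange M).drop (j + 1)).map F).prod
  have hsplit : ∀ f' g' : Fin M → Fin M, (∀ k, k ≠ i → k ≠ j → f' k = f k ∧ g' k = g k) →
      capelliTerm u E f' g' =
        T * (capelliEntry u E (f' i) (g' i) i * capelliEntry u E (f' j) (g' j) j) * D :=
    fun f' g' h => List.prod_map_finRange_of_eq_off_adjacent F _ hij fun k hi hj => by
      simp only [F, (h k hi hj).1, (h k hi hj).2]
  rw [hsplit f g fun _ _ _ => ⟨rfl, rfl⟩,
    hsplit (f ∘ swap i j) g fun k hi hj => ⟨by simp [swap_apply_of_ne_of_ne hi hj], rfl⟩,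
    hsplit f (g ∘ swap i j) fun k hi hj => ⟨rfl, by simp [swap_apply_of_ne_of_ne hi hj]⟩,
    hsplit (f ∘ swap i j) (g ∘ swap i j) fun k hi hj =>
      ⟨by simp [swap_apply_of_ne_of_ne hi hj], by simp [swap_apply_of_ne_of_ne hi hj]⟩]
  simp only [comp_apply, swap_apply_left, swap_apply_right]
  linear_combination (norm := noncomm_ring)
    T * capelliEntry_adjacent_minor u hE (f i) (f j) (g i) (g j) hij * D

theorem colDet_comp_swap_adjacent (hE : GlRelations E) (g : Fin M → Fin M) {i j : Fin M}
    (hij : (j : ℕ) = i + 1) : colDet u E (g ∘ swap i j) = -colDet u E g := by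
  have hne : i ≠ j := Fin.ne_of_val_ne (by omega)
  have hsum : ∑ σ : Perm (Fin M), (sign σ : ℤ) • (capelliTerm u E σ g -
      capelliTerm u E ⇑(σ * swap i j) g + capelliTerm u E σ (g ∘ swap i j) -
      capelliTerm u E ⇑(σ * swap i j) (g ∘ swap i j)) = 0 :=
    Finset.sum_eq_zero fun σ _ => by
      rw [Perm.coe_mul, capelliTerm_adjacent_alternating u hE _ _ hij, smul_zero]
  have h₁ := sum_sign_smul_mul_swap (fun σ : Perm (Fin M) => capelliTerm u E σ g) hne
  have h₂ := sum_sign_smul_mul_swap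
    (fun σ : Perm (Fin M) => capelliTerm u E σ (g ∘ swap i j)) hne
  simp only [smul_sub, smul_add, Finset.sum_add_distrib, Finset.sum_sub_distrib] at hsum
  rw [h₁, h₂] at hsum
  have h : colDet u E (g ∘ swap i j) + colDet u E g =
      -(colDet u E (g ∘ swap i j) + colDet u E g) := by
    rw [eq_neg_iff_add_eq_zero, ← hsum, colDet, colDet]
    abel
  have : IsAddTorsionFree A := .of_isTorsionFree ℂ A
  exact eq_neg_of_add_eq_zero_left (self_eq_neg.mp h)

theorem colDet_comp_perm (hE : GlRelations E) (σ : Perm (Fin M)) (g : Fin M → Fin M) :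
    colDet u E (g ∘ σ) = (sign σ : ℤ) • colDet u E g := by
  cases M with
  | zero => simp [Subsingleton.elim σ 1]
  | succ n =>
    have hσ : σ ∈ Submonoid.closure (Set.range fun i : Fin n => swap i.castSucc i.succ) := by
      rw [mclosure_swap_castSucc_succ]
      exact Submonoid.mem_top σ
    induction hσ using Submonoid.closure_induction generalizing g with
    | mem τ hτ =>
      obtain ⟨i, rfl⟩ := hτ
      rw [colDet_comp_swap_adjacent u hE g (by simp), sign_swap (Fin.castSucc_lt_succ (i := i)).ne]
      simp
    | one => simp
    | mul τ τ' _ _ hτ hτ' =>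
      rw [Perm.coe_mul, ← comp_assoc, hτ', hτ, smul_smul, Perm.sign_mul, mul_comm]
      push_cast
      rfl

theorem colDet_eq_zero_of_eq (hE : GlRelations E) {g : Fin M → Fin M} {i j : Fin M}
    (hij : i ≠ j) (hg : g i = g j) : colDet u E g = 0 := by
  have hgswap : g ∘ swap i j = g := by
    funext k
    simp only [comp_apply, swap_apply_def]
    split_ifs <;> simp_all
  have : IsAddTorsionFree A := .of_isTorsionFree ℂ A
  apply self_eq_neg.mp
  conv_lhs => rw [← hgswap, colDet_comp_perm u hE, sign_swap hij]
  simp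

theorem colDet_update_id (hE : GlRelations E) (p q : Fin M) :
    colDet u E (update id p q) = if p = q then colDet u E id else 0 := by
  split_ifs with hpq
  · subst hpq
    rw [show update (id : Fin M → Fin M) p p = id from update_eq_self p id]
  · exact colDet_eq_zero_of_eq u hE hpq (by simp [update_of_ne (Ne.symm hpq)])

theorem capelliTerm_mul_sub (hE : GlRelations E) (f : Fin M → Fin M) (p q : Fin M) :
    capelliTerm u E f id * E p q - E p q * capelliTerm u E f id =
      capelliTerm u E f (update id p q) -
        ∑ k, if f k = q then capelliTerm u E (update f k p) id else 0 := by
  set F : Fin M → A := fun k => capelliEntry u E (f k) k k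
  have hright : ∀ k, capelliTerm u E f (update id k q) =
      ((List.finRange M).map (update F k (capelliEntry u E (f k) q k))).prod := fun k => by
    rw [capelliTerm]
    congr 2
    funext i
    exact apply_update (fun i x => capelliEntry u E (f i) x i) id k q i
  have hleft : ∀ k, capelliTerm u E (update f k p) id =
      ((List.finRange M).map (update F k (capelliEntry u E p k k))).prod := fun k => by
    rw [capelliTerm]
    congr 2
    funext i
    exact apply_update (fun i x => capelliEntry u E x i i) f k p i
  have hcollapse : capelliTerm u E f (update id p q) =
      ∑ k, if p = k then capelliTerm u E f (update id k q) else 0 := by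
    simp
  rw [capelliTerm, List.prod_map_finRange_mul_sub_mul_prod, hcollapse, ← Finset.sum_sub_distrib]
  refine Finset.sum_congr rfl fun k _ => ?_
  simp only [id, capelliEntry_mul_sub u hE, hright, hleft, List.prod_map_finRange_update]
  split_ifs <;> noncomm_ring

theorem capelli_mul_comm (hE : GlRelations E) (p q : Fin M) :
    capelli M u E * E p q = E p q * capelli M u E := by
  rw [← sub_eq_zero, capelli_eq_colDet, colDet, Finset.sum_mul, Finset.mul_sum,
    ← Finset.sum_sub_distrib]
  simp only [smul_mul_assoc, mul_smul_comm, ← smul_sub, capelliTerm_mul_sub u hE]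
  simp only [smul_sub, Finset.sum_sub_distrib]
  have hcol := colDet_update_id u hE p q
  have hrow := sum_sign_smul_sum_update (fun f => capelliTerm u E f id) p q
  simp only [colDet] at hcol hrow
  rw [hcol, hrow, sub_self]

section HighestWeight

variable {V : Type*} [AddCommGroup V] [Module ℂ V] {e : Fin M → Fin M → Module.End ℂ V}
  {μ : Fin M → ℤ} {v₀ : V}

theorem capelliEntry_self_apply (hdiag : ∀ i, e i i v₀ = (μ i : ℂ) • v₀) (k : Fin M) :
    capelliEntry u e k k k v₀ = (u + (k : ℕ) + 1 - M - μ k) • v₀ := by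
  rw [capelliEntry, if_pos rfl, LinearMap.sub_apply, Module.algebraMap_end_apply, hdiag, ← sub_smul]

theorem capelliTerm_apply_eq_zero (hdiag : ∀ i, e i i v₀ = (μ i : ℂ) • v₀)
    (hup : ∀ i j, i < j → e i j v₀ = 0) {σ : Perm (Fin M)} (hσ : σ ≠ 1) :
    capelliTerm u e σ id v₀ = 0 := by
  have hne : σ.support.Nonempty := Finset.nonempty_iff_ne_empty.2 (mt support_eq_empty_iff.1 hσ)
  set j := σ.support.max' hne
  have hj : j ∈ σ.support := σ.support.max'_mem hne
  have hfix : ∀ k, j < k → σ k = k := fun k hk =>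
    notMem_support.1 fun h => (σ.support.le_max' k h).not_gt hk
  have hlt : σ j < j := lt_of_le_of_ne (σ.support.le_max' _ (apply_mem_support.2 hj))
    (mem_support.1 hj)
  rw [capelliTerm, List.prod_map_finRange_eq_take_mul_drop _ j]
  simp only [id_eq]
  rw [Module.End.mul_apply, Module.End.mul_apply,
    Module.End.list_prod_map_apply_eq_smul _ (fun k : Fin M => u + (k : ℕ) + 1 - M - μ k) v₀ _
      fun k hk => by
        rw [hfix k (by have := List.mem_drop_finRange.1 hk; omega)]
        exact capelliEntry_self_apply u hdiag k,
    map_smul, capelliEntry, LinearMap.sub_apply, if_neg (mem_support.1 hj), hup _ _ hlt]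
  simp

theorem capelli_apply_of_highestWeight (hdiag : ∀ i, e i i v₀ = (μ i : ℂ) • v₀)
    (hup : ∀ i j, i < j → e i j v₀ = 0) :
    capelli M u e v₀ = (∏ i : Fin M, (u - μ i + (i : ℕ) + 1 - M)) • v₀ := by
  rw [capelli_eq_colDet, colDet, LinearMap.sum_apply, Finset.sum_eq_single 1
    (fun σ _ hσ => by rw [LinearMap.smul_apply, capelliTerm_apply_eq_zero u hdiag hup hσ,
      smul_zero]) (by simp), Perm.sign_one, Units.val_one, one_smul, capelliTerm]
  simp only [Perm.one_apply, id_eq]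
  rw [Module.End.list_prod_map_apply_eq_smul _ (fun k : Fin M => u + (k : ℕ) + 1 - M - μ k) v₀ _
      fun k _ => capelliEntry_self_apply u hdiag k, Fin.prod_univ_def]
  congr 3
  funext k
  ring

end HighestWeight

end Capelli

/-- In `U(gl_M)` the Capelli determinant `C(u)` is central, and it acts
on the irreducible highest-weight module `V_μ` with highest weight
`μ = (μ₁ ≥ ⋯ ≥ μ_M) ∈ ℤ^M` as the scalar `∏_{i=1}^M (u - μ_i + i - M)`. -/
theorem statement13 (M : ℕ) (u : ℂ) :
    (∀ (A : Type) [Ring A] [Algebra ℂ A] (E : Fin M → Fin M → A),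
      (∀ i j p q : Fin M,
        E i j * E p q - E p q * E i j =
          (if p = j then E i q else 0) - (if i = q then E p j else 0)) →
      ∀ p q : Fin M, capelli M u E * E p q = E p q * capelli M u E) ∧
    (∀ (V : Type) [AddCommGroup V] [Module ℂ V]
        (e : Fin M → Fin M → Module.End ℂ V) (μ : Fin M → ℤ),
      Antitone μ →
      (∀ i j p q : Fin M,
        e i j * e p q - e p q * e i j =
          (if p = j then e i q else 0) - (if i = q then e p j else 0)) →
      (∀ W : Submodule ℂ V, (∀ i j, ∀ v ∈ W, e i j v ∈ W) → W = ⊥ ∨ W = ⊤) →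
      ∀ v₀ : V, v₀ ≠ 0 →
        (∀ i : Fin M, e i i v₀ = ((μ i : ℂ)) • v₀) →
        (∀ i j : Fin M, i < j → e i j v₀ = 0) →
        capelli M u e =
          (∏ i : Fin M, (u - (μ i : ℂ) + (i : ℕ) + 1 - M)) • (1 : Module.End ℂ V)) := by
  refine ⟨fun A _ _ E hE p q => Capelli.capelli_mul_comm u hE p q, ?_⟩
  intro V _ _ e μ _ hE hirr v₀ hv₀ hdiag hup
  exact Module.End.eq_smul_one_of_forall_commute e hirr
    (fun i j => Capelli.capelli_mul_comm u hE i j) hv₀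
    (Capelli.capelli_apply_of_highestWeight u hdiag hup)
end
end

section
/- For a partition μ = (μ₁ ≥ ⋯ ≥ μ_l) ∈ ℕ^l, the transformed Hall–Littlewood polynomial H_μ(a; q) := S^q_{μ₁} S^q_{μ₂} ⋯ S^q_{μ_l}(1), where S^q_m is the Jing operator (S^q_m f)(a₁,…,a_n; q) = Σ_{i=1}^n f(a₁,…,q a_i,…,a_n; q) · a_i^m / ∏_{j≠i}(1 - a_j/a_i), is a symmetric polynomial in a₁, …, a_n with coefficients in ℤ[q] (i.e., the apparent denominators cancel and the result is S_n-invariant). -/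
/-!
Let `f` be symmetric in `x₁, …, xₙ`. Substituting `xᵢ ↦ q xᵢ` in `f` gives `F(xᵢ)` for one
polynomial `F` with symmetric coefficients, the same for every `i`. By the fundamental theorem
it suffices to check this for the elementary symmetric polynomials:
`e_{k+1}(…, q xᵢ, …) = e'_{k+1} + q xᵢ e'_k`, where `e'_k = Σ_s (-xᵢ)^s e_{k-s}` are the
elementary symmetric polynomials in the other variables. Hence
`S_m f = Σᵢ P(xᵢ) / ∏_{j≠i} (xᵢ - xⱼ)` with `P = F·T^{m+n-1}`, and by Lagrange interpolation
this is the coefficient of `T^{n-1}` in `P mod ∏ⱼ (T - xⱼ)`. Division by this monic polynomial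
with symmetric coefficients keeps the coefficients symmetric, so the Jing operators preserve
symmetric polynomials, and the claim follows by iterating from `1`.
-/

noncomputable section

/-- The ring `ℤ[q][a₁,…,a_n]` (with `q = Polynomial.X` in the coefficients). -/
abbrev HLRing (n : ℕ) := MvPolynomial (Fin n) (Polynomial ℤ)

abbrev HLField (n : ℕ) := FractionRing (HLRing n)

def qvar (n : ℕ) : HLRing n := MvPolynomial.C Polynomial.X

def scaleVar (n : ℕ) (i : Fin n) : HLRing n →ₐ[Polynomial ℤ] HLRing n :=
  MvPolynomial.aeval fun j =>
    if j = i then qvar n * MvPolynomial.X j else MvPolynomial.X j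

def av (n : ℕ) (i : Fin n) : HLField n :=
  algebraMap (HLRing n) (HLField n) (MvPolynomial.X i)

open Finset Polynomial

namespace Lagrange

theorem coeff_modByMonic_nodal_eq_sum {F ι : Type*} [Field F] [DecidableEq ι]
    {s : Finset ι} {v : ι → F} (hvs : Set.InjOn v s) (P : F[X]) :
    (P %ₘ nodal s v).coeff (#s - 1) =
      ∑ i ∈ s, P.eval (v i) / ∏ j ∈ s.erase i, (v i - v j) := by
  have hdeg : (P %ₘ nodal s v).degree < #s :=
    degree_nodal (v := v) ▸ degree_modByMonic_lt P nodal_monic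
  rw [coeff_eq_sum hvs hdeg]
  refine sum_congr rfl fun i hi => ?_
  rw [modByMonic_eq_sub_mul_div, eval_sub, eval_mul, eval_nodal_at_node hi,
    zero_mul, sub_zero]

theorem map_nodal {R S ι : Type*} [CommRing R] [CommRing S] (f : R →+* S) (s : Finset ι)
    (v : ι → R) : (nodal s v).map f = nodal s (f ∘ v) := by
  simp [nodal, Polynomial.map_prod]

end Lagrange

theorem Multiset.esymm_cons_succ {R : Type*} [CommSemiring R] (a : R) (s : Multiset R) (k : ℕ) :
    (a ::ₘ s).esymm (k + 1) = s.esymm (k + 1) + a * s.esymm k := by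
  simp [Multiset.esymm, Multiset.sum_map_mul_left]

namespace MvPolynomial

variable {σ R : Type*} [CommRing R]

variable (σ R) in
/-- Stated as invariance of the whole polynomial, so that compatibility with `%ₘ` is
`map_modByMonic`. -/
def symmetricCoeffs : Subring (MvPolynomial σ R)[X] where
  carrier := {P | ∀ e : Equiv.Perm σ, P.map (rename e).toRingHom = P}
  mul_mem' hP hQ e := by rw [Polynomial.map_mul, hP e, hQ e]
  one_mem' e := Polynomial.map_one _
  add_mem' hP hQ e := by rw [Polynomial.map_add, hP e, hQ e]
  zero_mem' e := Polynomial.map_zero _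
  neg_mem' hP e := by rw [Polynomial.map_neg, hP e]

theorem isSymmetric_coeff_of_mem_symmetricCoeffs {P : (MvPolynomial σ R)[X]}
    (hP : P ∈ symmetricCoeffs σ R) (k : ℕ) : (P.coeff k).IsSymmetric := fun e =>
  (Polynomial.coeff_map _ _).symm.trans (congrArg (Polynomial.coeff · k) (hP e))

theorem C_mem_symmetricCoeffs {p : MvPolynomial σ R} (hp : p.IsSymmetric) :
    Polynomial.C p ∈ symmetricCoeffs σ R := fun e => by
  rw [Polynomial.map_C]
  exact congrArg Polynomial.C (hp e)

theorem X_mem_symmetricCoeffs : (Polynomial.X : (MvPolynomial σ R)[X]) ∈ symmetricCoeffs σ R :=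
  fun _ => Polynomial.map_X _

theorem modByMonic_mem_symmetricCoeffs {P N : (MvPolynomial σ R)[X]} (hN : N.Monic)
    (hP : P ∈ symmetricCoeffs σ R) (hN' : N ∈ symmetricCoeffs σ R) :
    P %ₘ N ∈ symmetricCoeffs σ R := fun e => by
  rw [map_modByMonic _ hN, hP e, hN' e]

variable [Fintype σ]

theorem nodal_X_mem_symmetricCoeffs :
    Lagrange.nodal univ (X : σ → MvPolynomial σ R) ∈ symmetricCoeffs σ R := fun e => by
  rw [Lagrange.map_nodal, Lagrange.nodal, Lagrange.nodal]
  simpa [Function.comp_def] using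
    Equiv.prod_comp e fun j => (Polynomial.X - Polynomial.C (X j) : (MvPolynomial σ R)[X])

variable (σ R) in
/-- The recursion is `esymm_succ_eq` solved for the erased term. -/
def erasedEsymmPoly : ℕ → (MvPolynomial σ R)[X]
  | 0 => 1
  | k + 1 => Polynomial.C (esymm σ R (k + 1)) - Polynomial.X * erasedEsymmPoly k

theorem erasedEsymmPoly_mem_symmetricCoeffs (k : ℕ) :
    erasedEsymmPoly σ R k ∈ symmetricCoeffs σ R := by
  induction k with
  | zero => exact one_mem _
  | succ k ih =>
    exact sub_mem (C_mem_symmetricCoeffs (esymm_isSymmetric σ R _))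
      (mul_mem X_mem_symmetricCoeffs ih)

variable [DecidableEq σ]

theorem aeval_esymm_succ {S : Type*} [CommRing S] [Algebra R S] (g : σ → S)
    (i : σ) (k : ℕ) : aeval g (esymm σ R (k + 1)) =
      ((univ.erase i).val.map g).esymm (k + 1) + g i * ((univ.erase i).val.map g).esymm k := by
  have huniv : (univ : Finset σ).val = i ::ₘ (univ.erase i).val := by
    rw [Finset.erase_val, Multiset.cons_erase (mem_univ_val i)]
  rw [aeval_esymm_eq_multiset_esymm, huniv, Multiset.map_cons, Multiset.esymm_cons_succ]

variable (R) in
def esymmErase (i : σ) (k : ℕ) : MvPolynomial σ R :=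
  ((univ.erase i).val.map (X : σ → MvPolynomial σ R)).esymm k

theorem esymm_succ_eq (i : σ) (k : ℕ) :
    esymm σ R (k + 1) = esymmErase R i (k + 1) + X i * esymmErase R i k := by
  rw [esymmErase, esymmErase, ← aeval_esymm_succ (R := R) (X : σ → MvPolynomial σ R) i k,
    aeval_X_left_apply]

def scaleAt (c : MvPolynomial σ R) (i : σ) : MvPolynomial σ R →ₐ[R] MvPolynomial σ R :=
  aeval fun j => if j = i then c * X j else X j

theorem scaleAt_esymm_succ (c : MvPolynomial σ R) (i : σ) (k : ℕ) :
    scaleAt c i (esymm σ R (k + 1)) = esymmErase R i (k + 1) + c * X i * esymmErase R i k := by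
  have hoff : ∀ j ∈ (univ.erase i).val, (if j = i then c * X j else X j) = X j :=
    fun j hj => if_neg (Finset.ne_of_mem_erase hj)
  rw [scaleAt, aeval_esymm_succ _ i, Multiset.map_congr rfl hoff, if_pos rfl, esymmErase,
    esymmErase]

theorem eval_X_erasedEsymmPoly (i : σ) (k : ℕ) :
    (erasedEsymmPoly σ R k).eval (X i) = esymmErase R i k := by
  induction k with
  | zero => simp [erasedEsymmPoly, esymmErase, Multiset.esymm]
  | succ k ih =>
    rw [erasedEsymmPoly, Polynomial.eval_sub, Polynomial.eval_mul, Polynomial.eval_C,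
      Polynomial.eval_X, ih, esymm_succ_eq i]
    ring

def scalableSubalgebra (c : MvPolynomial σ R) : Subalgebra R (MvPolynomial σ R) where
  carrier := {f | ∃ F ∈ symmetricCoeffs σ R, ∀ i, scaleAt c i f = F.eval (X i)}
  mul_mem' := by
    rintro f g ⟨F, hF, hFf⟩ ⟨G, hG, hGg⟩
    exact ⟨F * G, mul_mem hF hG, fun i => by rw [map_mul, hFf, hGg, Polynomial.eval_mul]⟩
  add_mem' := by
    rintro f g ⟨F, hF, hFf⟩ ⟨G, hG, hGg⟩
    exact ⟨F + G, add_mem hF hG, fun i => by rw [map_add, hFf, hGg, Polynomial.eval_add]⟩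
  algebraMap_mem' r := ⟨Polynomial.C (C r), C_mem_symmetricCoeffs (IsSymmetric.C r),
    fun i => by rw [AlgHom.commutes, Polynomial.eval_C, algebraMap_eq]⟩

theorem esymm_mem_scalableSubalgebra {c : MvPolynomial σ R} (hc : c.IsSymmetric) (k : ℕ) :
    esymm σ R k ∈ scalableSubalgebra c := by
  cases k with
  | zero => exact esymm_zero σ R ▸ one_mem _
  | succ k =>
    refine ⟨erasedEsymmPoly σ R (k + 1) + Polynomial.C c * Polynomial.X * erasedEsymmPoly σ R k,
      add_mem (erasedEsymmPoly_mem_symmetricCoeffs _) (mul_mem (mul_mem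
        (C_mem_symmetricCoeffs hc) X_mem_symmetricCoeffs) (erasedEsymmPoly_mem_symmetricCoeffs _)),
      fun i => ?_⟩
    rw [scaleAt_esymm_succ, Polynomial.eval_add, Polynomial.eval_mul, Polynomial.eval_mul,
      Polynomial.eval_C, Polynomial.eval_X, eval_X_erasedEsymmPoly, eval_X_erasedEsymmPoly]

theorem IsSymmetric.mem_scalableSubalgebra {c f : MvPolynomial σ R} (hf : f.IsSymmetric)
    (hc : c.IsSymmetric) : f ∈ scalableSubalgebra c := by
  obtain ⟨p, hp⟩ := esymmAlgHom_surjective R le_rfl ⟨f, hf⟩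
  have hf_mem :
      f ∈ Algebra.adjoin R (Set.range fun i : Fin (Fintype.card σ) => esymm σ R (i + 1)) := by
    rw [Algebra.adjoin_range_eq_range_aeval]
    exact ⟨p, (esymmAlgHom_apply p).symm.trans (congrArg Subtype.val hp)⟩
  exact Algebra.adjoin_le (Set.range_subset_iff.2 fun _ => esymm_mem_scalableSubalgebra hc _)
    hf_mem

variable [Nontrivial R] {K : Type*} [Field K] {φ : MvPolynomial σ R →+* K}

theorem exists_isSymmetric_eq_sum_div_prod_sub (hφ : Function.Injective φ)
    {P : (MvPolynomial σ R)[X]} (hP : P ∈ symmetricCoeffs σ R) :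
    ∃ g : MvPolynomial σ R, g.IsSymmetric ∧
      φ g = ∑ i, (P.map φ).eval (φ (X i)) / ∏ j ∈ univ.erase i, (φ (X i) - φ (X j)) := by
  refine ⟨(P %ₘ Lagrange.nodal univ X).coeff (Fintype.card σ - 1),
    isSymmetric_coeff_of_mem_symmetricCoeffs
      (modByMonic_mem_symmetricCoeffs Lagrange.nodal_monic hP nodal_X_mem_symmetricCoeffs) _, ?_⟩
  rw [← Polynomial.coeff_map, map_modByMonic _ Lagrange.nodal_monic, Lagrange.map_nodal,
    ← card_univ, Lagrange.coeff_modByMonic_nodal_eq_sum (hφ.comp X_injective).injOn]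
  rfl

theorem exists_isSymmetric_jing (hφ : Function.Injective φ) {c f : MvPolynomial σ R}
    (hc : c.IsSymmetric) (hf : f.IsSymmetric) (m : ℕ) :
    ∃ g : MvPolynomial σ R, g.IsSymmetric ∧
      φ g = ∑ i, φ (scaleAt c i f) * φ (X i) ^ m /
        ∏ j ∈ univ.erase i, (1 - φ (X j) / φ (X i)) := by
  obtain ⟨F, hF, hFf⟩ := hf.mem_scalableSubalgebra hc
  obtain ⟨g, hg, hφg⟩ := exists_isSymmetric_eq_sum_div_prod_sub hφ
    (mul_mem hF (pow_mem X_mem_symmetricCoeffs (m + (Fintype.card σ - 1))))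
  refine ⟨g, hg, hφg.trans (sum_congr rfl fun i _ => ?_)⟩
  have hxi : φ (X i) ≠ 0 := (map_ne_zero_iff φ hφ).2 (X_ne_zero i)
  have hden : ∏ j ∈ univ.erase i, (1 - φ (X j) / φ (X i)) =
      (∏ j ∈ univ.erase i, (φ (X i) - φ (X j))) / φ (X i) ^ (Fintype.card σ - 1) := by
    rw [prod_congr rfl fun j _ => one_sub_div hxi, prod_div_distrib, prod_const,
      card_erase_of_mem (mem_univ i), card_univ]
  rw [hden, Polynomial.map_mul, Polynomial.eval_mul, Polynomial.eval_map,
    Polynomial.eval₂_at_apply, ← hFf, Polynomial.map_pow, Polynomial.map_X, Polynomial.eval_pow,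
    Polynomial.eval_X, pow_add]
  field_simp

end MvPolynomial

theorem exists_seq_backward_recursion {α : Type*} {l : ℕ} (a : α) (step : Fin l → α → α) :
    ∃ seq : ℕ → α, seq l = a ∧
      ∀ t (ht : t < l), seq t = step ⟨t, ht⟩ (seq (t + 1)) := by
  induction l with
  | zero => exact ⟨fun _ => a, rfl, fun t ht => absurd ht (Nat.not_lt_zero t)⟩
  | succ l ih =>
    obtain ⟨seq, hl, hstep⟩ := ih fun t => step t.succ
    refine ⟨fun | 0 => step 0 (seq 0) | t + 1 => seq t, hl, fun t ht => ?_⟩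
    cases t with
    | zero => rfl
    | succ t => exact hstep t (Nat.lt_of_succ_lt_succ ht)

theorem statement18_general (n l : ℕ)
    (μ : Fin l → ℕ) :
    ∃ seq : ℕ → HLRing n,
      seq l = 1 ∧
      (∀ t, MvPolynomial.IsSymmetric (seq t)) ∧
      ∀ t, ∀ ht : t < l,
        algebraMap (HLRing n) (HLField n) (seq t) =
          ∑ i : Fin n,
            algebraMap (HLRing n) (HLField n) (scaleVar n i (seq (t + 1))) *
                av n i ^ μ ⟨t, ht⟩ /
              ∏ j ∈ Finset.univ.erase i, (1 - av n j / av n i) := by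
  choose J hJ using fun (m : ℕ) (f : {f : HLRing n // f.IsSymmetric}) =>
    MvPolynomial.exists_isSymmetric_jing (IsFractionRing.injective (HLRing n) (HLField n))
      (c := qvar n) (MvPolynomial.IsSymmetric.C _) f.2 m
  obtain ⟨seq, hl, hstep⟩ := exists_seq_backward_recursion
    (⟨1, MvPolynomial.IsSymmetric.one⟩ : {f : HLRing n // f.IsSymmetric})
    fun t f => ⟨J (μ t) f, (hJ _ _).1⟩
  exact ⟨fun t => seq t, congrArg Subtype.val hl, fun t => (seq t).2, fun t ht =>
    (congrArg _ (congrArg Subtype.val (hstep t ht))).trans (hJ _ _).2⟩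

/-- The transformed Hall–Littlewood polynomial
`H_μ(a;q) = S^q_{μ₁} S^q_{μ₂} ⋯ S^q_{μ_l}(1)`, where the Jing operator is
`(S^q_m f)(a) = Σ_i f(a₁,…,q aᵢ,…,a_n) · aᵢ^m / ∏_{j≠i}(1 - a_j/a_i)`, is a symmetric
polynomial in `a₁,…,a_n` with coefficients in `ℤ[q]`: there is a sequence of symmetric
polynomials `seq l = 1, seq (l-1), …, seq 0 = H_μ` realizing the iteration in the
fraction field (the apparent denominators cancel at every step). -/
theorem statement18 (n l : ℕ) (hn : 0 < n)
    (μ : Fin l → ℕ) (hμ : Antitone μ) :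
    ∃ seq : ℕ → HLRing n,
      seq l = 1 ∧
      (∀ t, MvPolynomial.IsSymmetric (seq t)) ∧
      ∀ t, ∀ ht : t < l,
        algebraMap (HLRing n) (HLField n) (seq t) =
          ∑ i : Fin n,
            algebraMap (HLRing n) (HLField n) (scaleVar n i (seq (t + 1))) *
                av n i ^ μ ⟨t, ht⟩ /
              ∏ j ∈ Finset.univ.erase i, (1 - av n j / av n i) :=
  statement18_general n l μ
end
end
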